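/- For R ∈ ℝⁿˣⁿ invertible, the max pairing ⟦x,y⟧_{∞,R} = max_{i ∈ I_∞(Ry)} (Rx)ᵢ(Ry)ᵢ satisfies Deimling's inequality with respect to the weighted ℓ∞ norm ‖x‖_{∞,R} = ‖Rx‖_∞: for all x, y ∈ ℝⁿ, ⟦x,y⟧_{∞,R} ≤ ‖y‖_{∞,R} · lim_{h→0⁺}(‖y+hx‖_{∞,R} − ‖y‖_{∞,R})/h. -/

import Mathlib

open Filter Topology MeasureTheory

/-- The upper right Dini derivative `D⁺φ(t) = limsup_{h→0⁺} (φ(t+h)−φ(t))/h`. -/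
noncomputable def DiniUpper (φ : ℝ → ℝ) (t : ℝ) : ℝ :=
  Filter.limsup (fun h : ℝ => (φ (t + h) - φ t) / h) (nhdsWithin 0 (Set.Ioi 0))

/-- `ν` is a norm on `ℝⁿ`. -/
structure IsNorm {n : ℕ} (ν : (Fin n → ℝ) → ℝ) : Prop where
  pos : ∀ x, x ≠ 0 → 0 < ν x
  homog : ∀ (a : ℝ) (x : Fin n → ℝ), ν (a • x) = |a| * ν x
  triangle : ∀ x y, ν (x + y) ≤ ν x + ν y

/-- `P` is a weak pairing on `ℝⁿ`. -/
structure IsWeakPairing {n : ℕ} (P : (Fin n → ℝ) → (Fin n → ℝ) → ℝ) : Prop where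
  subadd : ∀ x₁ x₂ y, P (x₁ + x₂) y ≤ P x₁ y + P x₂ y
  cont : ∀ y, Continuous fun x => P x y
  homog_left : ∀ (a : ℝ), 0 ≤ a → ∀ x y, P (a • x) y = a * P x y
  homog_right : ∀ (a : ℝ), 0 ≤ a → ∀ x y, P x (a • y) = a * P x y
  neg_neg : ∀ x y, P (-x) (-y) = P x y
  posdef : ∀ x, x ≠ 0 → 0 < P x x
  cauchySchwarz : ∀ x y, |P x y| ≤ Real.sqrt (P x x) * Real.sqrt (P y y)

/-- A weak pairing `P` is compatible with the norm `ν`. -/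
def Compatible {n : ℕ} (ν : (Fin n → ℝ) → ℝ)
    (P : (Fin n → ℝ) → (Fin n → ℝ) → ℝ) : Prop :=
  ∀ x, P x x = (ν x) ^ 2

/-- Deimling's inequality: `⟦x,y⟧ ≤ ‖y‖ · lim_{h→0⁺}(‖y+hx‖−‖y‖)/h`
(the one-sided limit exists for every norm). -/
def DeimlingIneq {n : ℕ} (ν : (Fin n → ℝ) → ℝ)
    (P : (Fin n → ℝ) → (Fin n → ℝ) → ℝ) : Prop :=
  ∀ x y L, Filter.Tendsto (fun h : ℝ => (ν (y + h • x) - ν y) / h)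
      (nhdsWithin 0 (Set.Ioi 0)) (nhds L) → P x y ≤ ν y * L

/-- The curve norm derivative formula: for any differentiable curve,
`‖x(t)‖ D⁺‖x(t)‖ = ⟦ẋ(t), x(t)⟧` for a.e. `t`. -/
def CurveNormDerivFormula {n : ℕ} (ν : (Fin n → ℝ) → ℝ)
    (P : (Fin n → ℝ) → (Fin n → ℝ) → ℝ) : Prop :=
  ∀ (a b : ℝ) (x x' : ℝ → Fin n → ℝ),
    (∀ t ∈ Set.Ioo a b, HasDerivAt x (x' t) t) →
    ∀ᵐ t ∂(volume : Measure ℝ), t ∈ Set.Ioo a b →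
      ν (x t) * DiniUpper (fun s => ν (x s)) t = P (x' t) (x t)

/-- The operator norm on matrices induced by the norm `ν` on `ℝⁿ`. -/
noncomputable def opNorm {n : ℕ} (ν : (Fin n → ℝ) → ℝ)
    (A : Matrix (Fin n) (Fin n) ℝ) : ℝ :=
  sSup ((fun x => ν (A.mulVec x)) '' {x | ν x = 1})

/-- `m` is the matrix measure of `A` induced by `ν`:
`m = lim_{h→0⁺} (‖I + hA‖ − 1)/h`. -/
def HasMatrixMeasure {n : ℕ} (ν : (Fin n → ℝ) → ℝ)
    (A : Matrix (Fin n) (Fin n) ℝ) (m : ℝ) : Prop :=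
  Filter.Tendsto
    (fun h : ℝ => (opNorm ν ((1 : Matrix (Fin n) (Fin n) ℝ) + h • A) - 1) / h)
    (nhdsWithin 0 (Set.Ioi 0)) (nhds m)

/-- The max pairing `⟦x,y⟧_{∞,R} = max_{i ∈ I_∞(Ry)} (Rx)ᵢ(Ry)ᵢ`, where
`I_∞(v) = {i : |vᵢ| = ‖v‖_∞}`.  Here `‖·‖` on `Fin n → ℝ` is the sup norm. -/
noncomputable def maxPairing {n : ℕ} (R : Matrix (Fin n) (Fin n) ℝ)
    (x y : Fin n → ℝ) : ℝ :=
  sSup ((fun i => R.mulVec x i * R.mulVec y i) ''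
    {i | |R.mulVec y i| = ‖R.mulVec y‖})

/-- Lemma 25 (Deimling's inequality for the max pairing):
`⟦x,y⟧_{∞,R} ≤ ‖y‖_{∞,R} · lim_{h→0⁺}(‖y+hx‖_{∞,R} − ‖y‖_{∞,R})/h`. -/
theorem maxPairing_deimling_inequality {n : ℕ}
    (R : Matrix (Fin n) (Fin n) ℝ) (hR : IsUnit R.det) :
    ∀ (x y : Fin n → ℝ) (L : ℝ),
      Filter.Tendsto
        (fun h : ℝ => (‖R.mulVec (y + h • x)‖ - ‖R.mulVec y‖) / h)
        (nhdsWithin 0 (Set.Ioi 0)) (nhds L) →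
      maxPairing R x y ≤ ‖R.mulVec y‖ * L := by
  intro x y L hlim
  set u := R.mulVec x with hu
  set v := R.mulVec y with hv
  have hadd : ∀ h : ℝ, R.mulVec (y + h • x) = v + h • u := by
    intro h; simp [hu, hv, Matrix.mulVec_add, Matrix.mulVec_smul]
  rcases eq_or_ne v 0 with hv0 | hv0
  · rw [maxPairing]
    have : ‖v‖ = 0 := by simp [hv0]
    rw [← hu, ← hv, this, zero_mul]
    apply Real.sSup_le _ le_rfl
    rintro a ⟨i, _, rfl⟩
    simp [hv0]
  · have hvpos : 0 < ‖v‖ := norm_pos_iff.mpr hv0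
    rw [maxPairing, ← hu, ← hv]
    have hne : ((fun i => u i * v i) '' {i | |v i| = ‖v‖}).Nonempty := by
      have : Nonempty (Fin n) := by
        rcases Function.ne_iff.mp hv0 with ⟨i, _⟩; exact ⟨i⟩
      obtain ⟨i₀, hi₀⟩ := Finite.exists_max (fun i => |v i|)
      refine ⟨u i₀ * v i₀, ⟨i₀, ?_, rfl⟩⟩
      have h1 : |v i₀| ≤ ‖v‖ := by
        simpa [Real.norm_eq_abs] using norm_le_pi_norm v i₀
      have h2 : ‖v‖ ≤ |v i₀| := by
        apply (pi_norm_le_iff_of_nonneg (abs_nonneg _)).mpr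
        intro j; simpa [Real.norm_eq_abs] using hi₀ j
      exact le_antisymm h1 h2
    apply csSup_le hne
    rintro a ⟨i, hi, rfl⟩
    simp only [Set.mem_setOf_eq] at hi
    have hvi : v i ≠ 0 := by
      intro h0; rw [h0, abs_zero] at hi; exact hvpos.ne hi
    have havi : 0 < |v i| := abs_pos.mpr hvi
    have key : u i * v i / ‖v‖ ≤ L := by
      apply ge_of_tendsto hlim
      filter_upwards [self_mem_nhdsWithin] with h hh
      have hhpos : (0 : ℝ) < h := hh
      rw [hadd, le_div_iff₀ hhpos]
      have h1 : |v i + h * u i| ≤ ‖v + h • u‖ := by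
        simpa [Real.norm_eq_abs] using norm_le_pi_norm (v + h • u) i
      have h2 : (v i + h * u i) * v i / |v i| ≤ |v i + h * u i| := by
        rw [div_le_iff₀ havi]
        calc (v i + h * u i) * v i ≤ |(v i + h * u i) * v i| := le_abs_self _
          _ = |v i + h * u i| * |v i| := abs_mul _ _
      have h3 : (v i + h * u i) * v i / |v i| = |v i| + h * (u i * v i) / |v i| := by
        field_simp
        ring_nf
        rw [sq_abs]
      have h4 : h * (u i * v i) / |v i| = u i * v i / |v i| * h := by ring
      rw [← hi]
      linarith [h1, h2, h3, h4]
    have := (div_le_iff₀ hvpos).mp key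
    show u i * v i ≤ ‖v‖ * L
    linarith [this]
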